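/- arXiv:1411.5322 — 5 statements merged into one kernel-verified Lean document; each statement's English description precedes it below -/
import Mathlib

section
/- Let ρ(λ) be a probability density on a measurable space Λ (ρ ≥ 0, ∫ρ dλ = 1), and let A(a,λ), B(b,λ) be measurable functions with |A(a,λ)| ≤ 1 and |B(b,λ)| ≤ 1 for all settings a, b and all λ. Define E(a,b) = ∫ ρ(λ) A(a,λ) B(b,λ) dλ. Then for any settings a, a', b, b': |E(a,b) − E(a,b')| + |E(a',b) + E(a',b')| ≤ 2 (the CHSH inequality). -/
open MeasureTheory

/-!
Pointwise in `λ`, the integrands of `E(a,b) - E(a,b')` and `E(a',b) + E(a',b')` are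
`ρ A(a) (B(b) - B(b'))` and `ρ A(a') (B(b) + B(b'))`. Since `|x - y| + |x + y| = 2 max |x| |y| ≤ 2`
for `|x|, |y| ≤ 1`, their absolute values add up to at most `2ρ`; integrating against `μ` gives
at most `2 ∫ ρ = 2`.
-/

lemma abs_sub_add_abs_add_le_two {x y : ℝ} (hx : |x| ≤ 1) (hy : |y| ≤ 1) :
    |x - y| + |x + y| ≤ 2 := by
  rw [abs_le] at hx hy
  rcases abs_cases (x - y) with ⟨h, -⟩ | ⟨h, -⟩ <;>
    rcases abs_cases (x + y) with ⟨h', -⟩ | ⟨h', -⟩ <;> linarith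

lemma abs_mul_sub_add_abs_mul_add_le {r s t x y : ℝ} (hr : 0 ≤ r) (hs : |s| ≤ 1) (ht : |t| ≤ 1)
    (hx : |x| ≤ 1) (hy : |y| ≤ 1) :
    |r * s * x - r * s * y| + |r * t * x + r * t * y| ≤ 2 * r := by
  rw [← mul_sub, ← mul_add, abs_mul, abs_mul, abs_mul, abs_mul, abs_of_nonneg hr]
  calc r * |s| * |x - y| + r * |t| * |x + y| ≤ r * 1 * |x - y| + r * 1 * |x + y| := by gcongr
    _ = r * (|x - y| + |x + y|) := by ring
    _ ≤ 2 * r := by linarith [mul_le_mul_of_nonneg_left (abs_sub_add_abs_add_le_two hx hy) hr]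

section Integral

variable {Λ : Type*} [MeasurableSpace Λ] {μ : Measure Λ}

lemma abs_integral_add_abs_integral_le {f g h : Λ → ℝ} (hf : Integrable f μ)
    (hg : Integrable g μ) (hh : Integrable h μ) (hfg : ∀ᵐ l ∂μ, |f l| + |g l| ≤ h l) :
    |∫ l, f l ∂μ| + |∫ l, g l ∂μ| ≤ ∫ l, h l ∂μ :=
  calc |∫ l, f l ∂μ| + |∫ l, g l ∂μ| ≤ ∫ l, |f l| ∂μ + ∫ l, |g l| ∂μ :=
        add_le_add abs_integral_le_integral_abs abs_integral_le_integral_abs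
    _ = ∫ l, |f l| + |g l| ∂μ := (integral_add hf.abs hg.abs).symm
    _ ≤ ∫ l, h l ∂μ := integral_mono_ae (hf.abs.add hg.abs) hh hfg

lemma MeasureTheory.Integrable.mul_mul_of_abs_le_one {ρ X Y : Λ → ℝ} (hρ : Integrable ρ μ)
    (hX : AEStronglyMeasurable X μ) (hY : AEStronglyMeasurable Y μ)
    (hX_le : ∀ l, |X l| ≤ 1) (hY_le : ∀ l, |Y l| ≤ 1) :
    Integrable (fun l => ρ l * X l * Y l) μ :=
  (hρ.mul_bdd hX (ae_of_all _ hX_le)).mul_bdd hY (ae_of_all _ hY_le)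

end Integral

theorem chsh_inequality_general
    {Λ Setting : Type*} [MeasurableSpace Λ] (μ : Measure Λ)
    (ρ : Λ → ℝ) (hρ_nonneg : ∀ l, 0 ≤ ρ l)
    (hρ_int : Integrable ρ μ) (hρ_one : ∫ l, ρ l ∂μ = 1)
    (A B : Setting → Λ → ℝ)
    (hA_meas : ∀ a, Measurable (A a)) (hB_meas : ∀ b, Measurable (B b))
    (hA : ∀ a l, |A a l| ≤ 1) (hB : ∀ b l, |B b l| ≤ 1)
    (E : Setting → Setting → ℝ)
    (hE : ∀ a b, E a b = ∫ l, ρ l * A a l * B b l ∂μ)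
    (a a' b b' : Setting) :
    |E a b - E a b'| + |E a' b + E a' b'| ≤ 2 := by
  have hint : ∀ x y, Integrable (fun l => ρ l * A x l * B y l) μ := fun x y =>
    hρ_int.mul_mul_of_abs_le_one (hA_meas x).aestronglyMeasurable
      (hB_meas y).aestronglyMeasurable (hA x) (hB y)
  rw [hE, hE, hE, hE, ← integral_sub (hint a b) (hint a b'),
    ← integral_add (hint a' b) (hint a' b')]
  calc _ ≤ ∫ l, 2 * ρ l ∂μ :=
        abs_integral_add_abs_integral_le ((hint a b).sub (hint a b'))
          ((hint a' b).add (hint a' b')) (hρ_int.const_mul 2) <| ae_of_all _ fun l =>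
          abs_mul_sub_add_abs_mul_add_le (hρ_nonneg l) (hA a l) (hA a' l) (hB b l) (hB b' l)
    _ = 2 := by rw [integral_const_mul, hρ_one, mul_one]

theorem chsh_inequality
    {Λ Setting : Type*} [MeasurableSpace Λ] (μ : Measure Λ) [SigmaFinite μ]
    (ρ : Λ → ℝ) (hρ_meas : Measurable ρ) (hρ_nonneg : ∀ l, 0 ≤ ρ l)
    (hρ_int : Integrable ρ μ) (hρ_one : ∫ l, ρ l ∂μ = 1)
    (A B : Setting → Λ → ℝ)
    (hA_meas : ∀ a, Measurable (A a)) (hB_meas : ∀ b, Measurable (B b))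
    (hA : ∀ a l, |A a l| ≤ 1) (hB : ∀ b l, |B b l| ≤ 1)
    (E : Setting → Setting → ℝ)
    (hE : ∀ a b, E a b = ∫ l, ρ l * A a l * B b l ∂μ)
    (a a' b b' : Setting) :
    |E a b - E a b'| + |E a' b + E a' b'| ≤ 2 :=
  chsh_inequality_general μ ρ hρ_nonneg hρ_int hρ_one A B hA_meas hB_meas hA hB E hE a a' b b'
end

section
/- Under the same local hidden variable assumptions as CHSH, if additionally perfect anticorrelation holds, E(b',b') = −1 for the setting b', then |E(a,b) − E(a,b')| − E(b',b) ≤ 1 (Bell's original inequality). -/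
/-!
Weight the hidden-variable space by `ρ`, turning `E` into correlations `∫ A a * B b` under a
probability measure. Since `|A b' * B b'| ≤ 1` and its mean is `-1`, perfect anticorrelation holds
almost surely: `B b' = -A b'` with `|A b'| = 1`. Pointwise this gives
`|A a B b - A a B b'| ≤ |B b + A b'| = |A b' B b + 1| = 1 + A b' B b`, and integrating yields the
inequality.
-/

open MeasureTheory

section Weighting

variable {Ω : Type*} [MeasurableSpace Ω] {μ : Measure Ω} {ρ : Ω → ℝ}

lemma isProbabilityMeasure_withDensity_ofReal (hρ_nonneg : ∀ ω, 0 ≤ ρ ω)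
    (hρ_int : Integrable ρ μ) (hρ_one : ∫ ω, ρ ω ∂μ = 1) :
    IsProbabilityMeasure (μ.withDensity fun ω => ENNReal.ofReal (ρ ω)) := by
  constructor
  rw [withDensity_apply _ MeasurableSet.univ, Measure.restrict_univ,
    ← ofReal_integral_eq_lintegral_ofReal hρ_int (Filter.Eventually.of_forall hρ_nonneg),
    hρ_one, ENNReal.ofReal_one]

lemma integral_withDensity_ofReal (hρ_nonneg : ∀ ω, 0 ≤ ρ ω) (hρ : AEMeasurable ρ μ)
    (g : Ω → ℝ) :
    ∫ ω, g ω ∂μ.withDensity (fun ω => ENNReal.ofReal (ρ ω)) = ∫ ω, ρ ω * g ω ∂μ := by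
  rw [integral_withDensity_eq_integral_toReal_smul₀ hρ.ennreal_ofReal
    (Filter.Eventually.of_forall fun _ => ENNReal.ofReal_lt_top)]
  simp only [ENNReal.toReal_ofReal (hρ_nonneg _), smul_eq_mul]

end Weighting

lemma abs_mul_le_one_of_abs_le_one {x y : ℝ} (hx : |x| ≤ 1) (hy : |y| ≤ 1) : |x * y| ≤ 1 := by
  rw [abs_mul]; exact mul_le_one₀ hx (abs_nonneg _) hy

lemma abs_mul_sub_mul_le_one_add_mul {x y z w : ℝ} (hx : |x| ≤ 1) (hy : |y| ≤ 1) (hz : |z| ≤ 1)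
    (hw : |w| ≤ 1) (hwz : w * z = -1) : |x * y - x * z| ≤ 1 + w * y := by
  have hw2 := (sq_le_one_iff_abs_le_one w).mpr hw
  have hz2 := (sq_le_one_iff_abs_le_one z).mpr hz
  -- `(w + z) ^ 2 = w ^ 2 + z ^ 2 - 2 ≤ 0`
  have hz_eq : z = -w := by
    have : (w + z) ^ 2 = 0 := by nlinarith [sq_nonneg (w + z)]
    linear_combination pow_eq_zero_iff two_ne_zero |>.mp this
  have hw_one : |w| = 1 := by
    rw [← pow_eq_one_iff_of_nonneg (abs_nonneg w) two_ne_zero, sq_abs]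
    linear_combination -hwz + w * hz_eq
  have hwy : |w * y| ≤ 1 := by rwa [abs_mul, hw_one, one_mul]
  calc |x * y - x * z| = |x| * |y + w| := by rw [hz_eq, ← abs_mul]; ring_nf
    _ ≤ |y + w| := mul_le_of_le_one_left (abs_nonneg _) hx
    _ = |w| * |y + w| := by rw [hw_one, one_mul]
    _ = |w * y + 1| := by
      rw [← abs_mul]
      congr 1
      linear_combination -hwz + w * hz_eq
    _ = 1 + w * y := by rw [abs_of_nonneg (by linarith [neg_abs_le (w * y)]), add_comm]

section Probability

variable {Ω : Type*} [MeasurableSpace Ω] {ν : Measure Ω} [IsProbabilityMeasure ν]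

lemma ae_eq_neg_one_of_integral_eq_neg_one {f : Ω → ℝ} (hf : Integrable f ν)
    (hf_ge : ∀ᵐ ω ∂ν, -1 ≤ f ω) (h : ∫ ω, f ω ∂ν = -1) : ∀ᵐ ω ∂ν, f ω = -1 := by
  have hint : Integrable (fun ω => f ω + 1) ν := hf.add (integrable_const 1)
  have hzero : ∫ ω, (f ω + 1) ∂ν = 0 := by
    rw [integral_add hf (integrable_const 1), h, integral_const, probReal_univ, one_smul,
      neg_add_cancel]
  have hnonneg : 0 ≤ᵐ[ν] fun ω => f ω + 1 := by
    filter_upwards [hf_ge] with ω hω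
    exact neg_le_iff_add_nonneg.mp hω
  filter_upwards [(integral_eq_zero_iff_of_nonneg_ae hnonneg hint).mp hzero] with ω hω
  exact eq_neg_of_add_eq_zero_left hω

lemma integrable_mul_of_abs_le_one {f g : Ω → ℝ} (hf : Measurable f) (hg : Measurable g)
    (hf_le : ∀ ω, |f ω| ≤ 1) (hg_le : ∀ ω, |g ω| ≤ 1) : Integrable (fun ω => f ω * g ω) ν :=
  Integrable.of_bound (hf.mul hg).aestronglyMeasurable 1 <|
    Filter.Eventually.of_forall fun ω => abs_mul_le_one_of_abs_le_one (hf_le ω) (hg_le ω)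

theorem abs_integral_mul_sub_integral_mul_sub_integral_mul_le_one {x y z w : Ω → ℝ}
    (hx : Measurable x) (hy : Measurable y) (hz : Measurable z) (hw : Measurable w)
    (hx_le : ∀ ω, |x ω| ≤ 1) (hy_le : ∀ ω, |y ω| ≤ 1) (hz_le : ∀ ω, |z ω| ≤ 1)
    (hw_le : ∀ ω, |w ω| ≤ 1) (hwz : ∫ ω, w ω * z ω ∂ν = -1) :
    |∫ ω, x ω * y ω ∂ν - ∫ ω, x ω * z ω ∂ν| - ∫ ω, w ω * y ω ∂ν ≤ 1 := by
  have hxy := integrable_mul_of_abs_le_one (ν := ν) hx hy hx_le hy_le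
  have hxz := integrable_mul_of_abs_le_one (ν := ν) hx hz hx_le hz_le
  have hwy := integrable_mul_of_abs_le_one (ν := ν) hw hy hw_le hy_le
  have hanti : ∀ᵐ ω ∂ν, w ω * z ω = -1 :=
    ae_eq_neg_one_of_integral_eq_neg_one (integrable_mul_of_abs_le_one hw hz hw_le hz_le)
      (Filter.Eventually.of_forall fun ω =>
        (abs_le.mp (abs_mul_le_one_of_abs_le_one (hw_le ω) (hz_le ω))).1) hwz
  have hpointwise : ∀ᵐ ω ∂ν, |x ω * y ω - x ω * z ω| ≤ 1 + w ω * y ω := by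
    filter_upwards [hanti] with ω hω
    exact abs_mul_sub_mul_le_one_add_mul (hx_le ω) (hy_le ω) (hz_le ω) (hw_le ω) hω
  have := calc |∫ ω, x ω * y ω ∂ν - ∫ ω, x ω * z ω ∂ν|
      = |∫ ω, (x ω * y ω - x ω * z ω) ∂ν| := by rw [integral_sub hxy hxz]
    _ ≤ ∫ ω, |x ω * y ω - x ω * z ω| ∂ν := abs_integral_le_integral_abs
    _ ≤ ∫ ω, (1 + w ω * y ω) ∂ν :=
      integral_mono_ae (hxy.sub hxz).abs ((integrable_const 1).add hwy) hpointwise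
    _ = 1 + ∫ ω, w ω * y ω ∂ν := by rw [integral_add (integrable_const 1) hwy]; simp
  linarith

end Probability

theorem bell_original_inequality_general
    {Λ Setting : Type*} [MeasurableSpace Λ] (μ : Measure Λ)
    (ρ : Λ → ℝ) (hρ_nonneg : ∀ l, 0 ≤ ρ l)
    (hρ_int : Integrable ρ μ) (hρ_one : ∫ l, ρ l ∂μ = 1)
    (A B : Setting → Λ → ℝ)
    (hA_meas : ∀ a, Measurable (A a)) (hB_meas : ∀ b, Measurable (B b))
    (hA : ∀ a l, |A a l| ≤ 1) (hB : ∀ b l, |B b l| ≤ 1)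
    (E : Setting → Setting → ℝ)
    (hE : ∀ a b, E a b = ∫ l, ρ l * A a l * B b l ∂μ)
    (a b b' : Setting)
    (hanti : E b' b' = -1) :
    |E a b - E a b'| - E b' b ≤ 1 := by
  set ν := μ.withDensity fun l => ENNReal.ofReal (ρ l)
  have : IsProbabilityMeasure ν := isProbabilityMeasure_withDensity_ofReal hρ_nonneg hρ_int hρ_one
  have hE_ν : ∀ x y, E x y = ∫ l, A x l * B y l ∂ν := fun x y => by
    simp only [ν, integral_withDensity_ofReal hρ_nonneg hρ_int.aemeasurable, hE, mul_assoc]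
  rw [hE_ν] at hanti
  simp only [hE_ν]
  exact abs_integral_mul_sub_integral_mul_sub_integral_mul_le_one (hA_meas a) (hB_meas b)
    (hB_meas b') (hA_meas b') (hA a) (hB b) (hB b') (hA b') hanti

theorem bell_original_inequality
    {Λ Setting : Type*} [MeasurableSpace Λ] (μ : Measure Λ) [SigmaFinite μ]
    (ρ : Λ → ℝ) (hρ_meas : Measurable ρ) (hρ_nonneg : ∀ l, 0 ≤ ρ l)
    (hρ_int : Integrable ρ μ) (hρ_one : ∫ l, ρ l ∂μ = 1)
    (A B : Setting → Λ → ℝ)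
    (hA_meas : ∀ a, Measurable (A a)) (hB_meas : ∀ b, Measurable (B b))
    (hA : ∀ a l, |A a l| ≤ 1) (hB : ∀ b l, |B b l| ≤ 1)
    (E : Setting → Setting → ℝ)
    (hE : ∀ a b, E a b = ∫ l, ρ l * A a l * B b l ∂μ)
    (a b b' : Setting)
    (hanti : E b' b' = -1) :
    |E a b - E a b'| - E b' b ≤ 1 :=
  bell_original_inequality_general μ ρ hρ_nonneg hρ_int hρ_one A B hA_meas hB_meas hA hB E hE a b b'
    hanti
end

section
/- For the singlet state, the joint probability that Alice measures spin-up along direction at angle α and Bob spin-up along angle β is P(α,β) = (1/2) sin²((α−β)/2). At angles (α, β, β') = (0, 2π/3, π/3), the Wigner quantity S = P(α,β) − P(α,β') − P(β',β) equals 1/8 > 0, violating Wigner's inequality S ≤ 0. -/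
open Matrix Kronecker Real

noncomputable section

def pauli : Fin 3 → Matrix (Fin 2) (Fin 2) ℂ
  | 0 => !![0, 1; 1, 0]
  | 1 => !![0, -Complex.I; Complex.I, 0]
  | 2 => !![1, 0; 0, -1]

/-- The singlet state |ψ⁻⟩ = (|01⟩ − |10⟩)/√2. -/
def ψminus : Fin 2 × Fin 2 → ℂ := fun p =>
  if p = (0, 1) then ((Real.sqrt 2)⁻¹ : ℝ)
  else if p = (1, 0) then (-(Real.sqrt 2)⁻¹ : ℝ)
  else 0

/-- Spin-up eigenvector of cos θ σ₃ + sin θ σ₁ with eigenvalue +1. -/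
def up (θ : ℝ) : Fin 2 → ℂ := ![(Real.cos (θ/2) : ℝ), (Real.sin (θ/2) : ℝ)]

/-- Projector |up θ⟩⟨up θ|. -/
def proj (θ : ℝ) : Matrix (Fin 2) (Fin 2) ℂ := fun i j => up θ i * starRingEnd ℂ (up θ j)

/-- Joint probability P(α,β) = ‖(P_α ⊗ P_β)|ψ⁻⟩‖². -/
def P (α β : ℝ) : ℝ := ∑ p, Complex.normSq (((proj α ⊗ₖ proj β).mulVec ψminus) p)

lemma eig (θ : ℝ) : ((Real.cos θ : ℂ) • pauli 2 + (Real.sin θ : ℂ) • pauli 0).mulVec (up θ) = up θ := by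
  funext i
  have hc : Real.cos θ = Real.cos (θ/2)^2 - Real.sin (θ/2)^2 := by
    have h := Real.cos_two_mul (θ/2)
    have h2 := Real.sin_sq_add_cos_sq (θ/2)
    have : 2*(θ/2) = θ := by ring
    rw [this] at h; nlinarith
  have hs : Real.sin θ = 2 * Real.sin (θ/2) * Real.cos (θ/2) := by
    rw [← Real.sin_two_mul]; ring_nf
  have pyth := Real.sin_sq_add_cos_sq (θ/2)
  fin_cases i <;>
  · simp [pauli, up, Matrix.mulVec, dotProduct, Fin.sum_univ_succ,
      -Complex.ofReal_cos, -Complex.ofReal_sin]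
    rw [hc, hs]
    push_cast [-Complex.ofReal_cos, -Complex.ofReal_sin]
    have : (Real.sin (θ/2) : ℂ)^2 + (Real.cos (θ/2) : ℂ)^2 = 1 := by
      exact_mod_cast congrArg (Complex.ofReal ·) pyth
    first
    | linear_combination (Real.sin (θ/2) : ℂ) * this
    | linear_combination (Real.cos (θ/2) : ℂ) * this

set_option maxHeartbeats 1000000 in
lemma Pval (α β : ℝ) : P α β = 1/2 * Real.sin ((α - β)/2) ^ 2 := by
  have h2 : ((Real.sqrt 2)⁻¹ : ℝ)^2 = 1/2 := by
    rw [← Real.sqrt_inv, Real.sq_sqrt (by norm_num)]; norm_num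
  have hsin : Real.sin (α/2) * Real.cos (β/2) - Real.cos (α/2) * Real.sin (β/2)
      = Real.sin ((α-β)/2) := by
    rw [← Real.sin_sub]; ring_nf
  have pa := Real.sin_sq_add_cos_sq (α/2)
  have pb := Real.sin_sq_add_cos_sq (β/2)
  unfold P
  rw [Fintype.sum_prod_type]
  simp only [Matrix.mulVec, dotProduct, Fintype.sum_prod_type, proj, up, ψminus,
    Matrix.kroneckerMap_apply, Fin.sum_univ_succ, Fin.sum_univ_zero,
    Matrix.cons_val_zero, Matrix.cons_val_one, Matrix.head_cons,
    Complex.conj_ofReal, Prod.mk.injEq]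
  norm_num [← Complex.ofReal_mul, ← Complex.ofReal_neg, ← Complex.ofReal_add, ← Complex.ofReal_inv,
    Complex.normSq_ofReal, -Complex.ofReal_cos, -Complex.ofReal_sin]
  set sa := Real.sin (α/2); set ca := Real.cos (α/2)
  set sb := Real.sin (β/2); set cb := Real.cos (β/2)
  set D := Real.sin ((α-β)/2)
  linear_combination ((sa*cb - ca*sb)^2 * (sa^2+ca^2) * (sb^2+cb^2)) * h2
    + (1/2 * (sa*cb - ca*sb)^2 * (sb^2+cb^2)) * pa
    + (1/2 * (sa*cb - ca*sb)^2) * pb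
    + (1/2 * ((sa*cb - ca*sb) + D)) * hsin

theorem wigner_violation :
    (∀ θ : ℝ, ((Real.cos θ : ℂ) • pauli 2 + (Real.sin θ : ℂ) • pauli 0).mulVec (up θ) = up θ)
    ∧ (∀ α β : ℝ, P α β = 1/2 * Real.sin ((α - β)/2) ^ 2)
    ∧ P 0 (2*π/3) - P 0 (π/3) - P (π/3) (2*π/3) = 1/8
    ∧ (0:ℝ) < 1/8 := by
  refine ⟨eig, Pval, ?_, by norm_num⟩
  rw [Pval, Pval, Pval]
  have e1 : (0 - 2*π/3)/2 = -(π/3) := by ring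
  have e2 : (0 - π/3)/2 = -(π/6) := by ring
  have e3 : (π/3 - 2*π/3)/2 = -(π/6) := by ring
  rw [e1, e2, e3, Real.sin_neg, Real.sin_neg, Real.sin_pi_div_three, Real.sin_pi_div_six]
  have : Real.sqrt 3 ^ 2 = 3 := Real.sq_sqrt (by norm_num)
  nlinarith [this]

end
end

section
/- Let x₁, x₂, y₁, y₂, X, Y be real numbers with 0 ≤ x₁, x₂ ≤ X and 0 ≤ y₁, y₂ ≤ Y. Then −XY ≤ x₁y₁ − x₁y₂ + x₂y₁ + x₂y₂ − Yx₂ − Xy₁ ≤ 0. -/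
theorem clauser_horne_algebraic
    (x₁ x₂ y₁ y₂ X Y : ℝ)
    (hx₁ : 0 ≤ x₁) (hx₁' : x₁ ≤ X) (hx₂ : 0 ≤ x₂) (hx₂' : x₂ ≤ X)
    (hy₁ : 0 ≤ y₁) (hy₁' : y₁ ≤ Y) (hy₂ : 0 ≤ y₂) (hy₂' : y₂ ≤ Y) :
    -(X * Y) ≤ x₁ * y₁ - x₁ * y₂ + x₂ * y₁ + x₂ * y₂ - Y * x₂ - X * y₁ ∧
    x₁ * y₁ - x₁ * y₂ + x₂ * y₁ + x₂ * y₂ - Y * x₂ - X * y₁ ≤ 0 := by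
  have hX : 0 ≤ X := le_trans hx₁ hx₁'
  have hY : 0 ≤ Y := le_trans hy₁ hy₁'
  constructor <;>
  rcases le_total y₁ y₂ with h2 | h2 <;>
  rcases le_total (y₁ + y₂) Y with h3 | h3 <;>
  nlinarith [mul_nonneg hx₁ (sub_nonneg.2 h2), mul_nonneg hx₁ (sub_nonneg.2 h2),
    mul_nonneg (sub_nonneg.2 hx₁') (sub_nonneg.2 h2),
    mul_nonneg hx₂ (sub_nonneg.2 h3), mul_nonneg (sub_nonneg.2 hx₂') (sub_nonneg.2 h3),
    mul_nonneg hX hy₁, mul_nonneg hX hy₂,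
    mul_nonneg hX (sub_nonneg.2 hy₁'), mul_nonneg hX (sub_nonneg.2 hy₂')]
end

section
/- The two-qubit Werner state ρ_α = α|ψ⁻⟩⟨ψ⁻| + (1−α)/4 · 𝟙₄ is separable for α ≤ 1/3, i.e., it can be written as a convex combination of product states; explicitly, for α = 1/3 it equals an average over product states, and by convexity with the maximally mixed state the same holds for all α ≤ 1/3. -/
open Matrix Kronecker
open scoped ComplexOrder

noncomputable section

/-- The two-qubit Werner state ρ_α = α|ψ⁻⟩⟨ψ⁻| + (1−α)/4 · 𝟙₄. -/
def werner (α : ℝ) : Matrix (Fin 2 × Fin 2) (Fin 2 × Fin 2) ℂ :=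
  (α : ℂ) • Matrix.of (fun p q => ψminus p * starRingEnd ℂ (ψminus q)) +
    (((1 - α) / 4 : ℝ) : ℂ) • 1

/-!
At `α = 1/3`, averaging `P ⊗ P⊥` over the six eigenstates `P` of the Pauli matrices (with `P⊥` the
orthogonal eigenstate of the same Pauli matrix) gives exactly `(1/3)|ψ⁻⟩⟨ψ⁻| + (1/6)𝟙`, so `ρ_{1/3}`
is separable. The state `ρ₀ = 𝟙/4 = (𝟙/2) ⊗ (𝟙/2)` is a product state, and
`ρ_α = 3α ρ_{1/3} + (1 - 3α) ρ₀` is a convex combination of the two when `0 ≤ α ≤ 1/3`.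
-/

def IsDensityMatrix {n : Type*} [Fintype n] (ρ : Matrix n n ℂ) : Prop :=
  ρ.PosSemidef ∧ ρ.trace = 1

def IsSeparableState {m n : Type*} [Fintype m] [Fintype n] (ρ : Matrix (m × n) (m × n) ℂ) :
    Prop :=
  ∃ (k : ℕ) (p : Fin k → ℝ) (ρA : Fin k → Matrix m m ℂ) (ρB : Fin k → Matrix n n ℂ),
    (∀ i, 0 ≤ p i) ∧ (∑ i, p i = 1) ∧
    (∀ i, IsDensityMatrix (ρA i)) ∧ (∀ i, IsDensityMatrix (ρB i)) ∧
    ρ = ∑ i, ((p i : ℝ) : ℂ) • (ρA i ⊗ₖ ρB i)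

section States

variable {m n : Type*} [Fintype m] [Fintype n]

def pureState (v : n → ℂ) : Matrix n n ℂ :=
  (v ⬝ᵥ star v)⁻¹ • vecMulVec v (star v)

theorem isDensityMatrix_pureState {v : n → ℂ} (hv : v ≠ 0) : IsDensityMatrix (pureState v) := by
  have hnorm : v ⬝ᵥ star v ≠ 0 := by
    simpa [dotProduct_comm] using (dotProduct_star_self_eq_zero (v := v)).not.mpr hv
  refine ⟨(posSemidef_vecMulVec_self_star v).smul
    (inv_nonneg_of_nonneg (dotProduct_self_star_nonneg v)), ?_⟩
  rw [pureState, trace_smul, trace_vecMulVec, smul_eq_mul, inv_mul_cancel₀ hnorm]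

theorem isDensityMatrix_maximallyMixed [DecidableEq n] [Nonempty n] :
    IsDensityMatrix ((Fintype.card n : ℂ)⁻¹ • (1 : Matrix n n ℂ)) := by
  refine ⟨PosSemidef.one.smul (inv_nonneg_of_nonneg (Nat.cast_nonneg _)), ?_⟩
  rw [trace_smul, trace_one, smul_eq_mul, inv_mul_cancel₀ (by simp)]

theorem isSeparableState_kronecker {A : Matrix m m ℂ} {B : Matrix n n ℂ}
    (hA : IsDensityMatrix A) (hB : IsDensityMatrix B) : IsSeparableState (A ⊗ₖ B) :=
  ⟨1, fun _ => 1, fun _ => A, fun _ => B, fun _ => zero_le_one, by simp, fun _ => hA,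
    fun _ => hB, by simp⟩

theorem IsSeparableState.convexComb {ρ σ : Matrix (m × n) (m × n) ℂ} (hρ : IsSeparableState ρ)
    (hσ : IsSeparableState σ) {t : ℝ} (ht0 : 0 ≤ t) (ht1 : t ≤ 1) :
    IsSeparableState ((t : ℂ) • ρ + ((1 - t : ℝ) : ℂ) • σ) := by
  obtain ⟨k, p, ρA, ρB, hp, hp1, hA, hB, rfl⟩ := hρ
  obtain ⟨l, q, σA, σB, hq, hq1, hA', hB', rfl⟩ := hσ
  refine ⟨k + l, Fin.append (t • p) ((1 - t) • q), Fin.append ρA σA, Fin.append ρB σB,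
    ?_, ?_, ?_, ?_, ?_⟩
  · refine Fin.addCases (fun i => ?_) (fun i => ?_) <;>
      simp only [Fin.append_left, Fin.append_right, Pi.smul_apply, smul_eq_mul]
    · exact mul_nonneg ht0 (hp i)
    · exact mul_nonneg (by linarith) (hq i)
  · simp [Fin.sum_univ_add, ← Finset.mul_sum, hp1, hq1]
  · exact Fin.addCases (fun i => by simpa using hA i) (fun i => by simpa using hA' i)
  · exact Fin.addCases (fun i => by simpa using hB i) (fun i => by simpa using hB' i)
  · simp only [Fin.sum_univ_add, Fin.append_left, Fin.append_right, Finset.smul_sum, smul_smul,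
      Pi.smul_apply, smul_eq_mul, Complex.ofReal_mul]

end States

theorem werner_eq_convexComb (α : ℝ) :
    werner α = ((3 * α : ℝ) : ℂ) • werner (1 / 3) + ((1 - 3 * α : ℝ) : ℂ) • werner 0 := by
  simp only [werner]
  push_cast
  module

theorem werner_zero :
    werner 0 = ((2 : ℂ)⁻¹ • 1 : Matrix (Fin 2) (Fin 2) ℂ) ⊗ₖ ((2 : ℂ)⁻¹ • 1) := by
  rw [werner, smul_kronecker, kronecker_smul, one_kronecker_one, smul_smul]
  norm_num

-- Unnormalised eigenvectors of σ_z, σ_x, σ_y; the `k`-th antipodal vector is the orthogonal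
-- eigenvector of the same Pauli matrix.
def pauliEigenvector : Fin 6 → Fin 2 → ℂ :=
  ![![1, 0], ![0, 1], ![1, 1], ![1, -1], ![1, Complex.I], ![1, -Complex.I]]

def antipodalPauliEigenvector : Fin 6 → Fin 2 → ℂ :=
  ![![0, 1], ![1, 0], ![1, -1], ![1, 1], ![1, -Complex.I], ![1, Complex.I]]

theorem ofReal_sqrt_two_sq : ((Real.sqrt 2 : ℝ) : ℂ) ^ 2 = 2 := by
  rw [← Complex.ofReal_pow, Real.sq_sqrt zero_le_two, Complex.ofReal_ofNat]

theorem werner_third_eq_average :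
    werner (1 / 3) = ∑ k, ((1 / 6 : ℝ) : ℂ) •
      (pureState (pauliEigenvector k) ⊗ₖ pureState (antipodalPauliEigenvector k)) := by
  ext ⟨i, j⟩ ⟨k, l⟩
  fin_cases i <;> fin_cases j <;> fin_cases k <;> fin_cases l <;>
    simp [werner, ψminus, pureState, pauliEigenvector, antipodalPauliEigenvector, Fin.sum_univ_succ,
      vecMulVec, dotProduct, Prod.ext_iff, Complex.conj_ofReal] <;>
    ring_nf <;>
    norm_num [Complex.I_sq, ofReal_sqrt_two_sq]

theorem isSeparableState_werner_third : IsSeparableState (werner (1 / 3)) := by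
  refine ⟨6, fun _ => 1 / 6, fun k => pureState (pauliEigenvector k),
    fun k => pureState (antipodalPauliEigenvector k), fun _ => by norm_num, by norm_num,
    fun k => isDensityMatrix_pureState ?_, fun k => isDensityMatrix_pureState ?_,
    werner_third_eq_average⟩ <;>
  fin_cases k <;> simp [pauliEigenvector, antipodalPauliEigenvector]

theorem isSeparableState_werner_zero : IsSeparableState (werner 0) := by
  have hmixed : IsDensityMatrix ((2 : ℂ)⁻¹ • (1 : Matrix (Fin 2) (Fin 2) ℂ)) := by
    simpa using isDensityMatrix_maximallyMixed (n := Fin 2)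
  rw [werner_zero]
  exact isSeparableState_kronecker hmixed hmixed

/-- Werner states with α ≤ 1/3 are separable: convex combinations of product states. -/
theorem werner_separable (α : ℝ) (h0 : 0 ≤ α) (h : α ≤ 1 / 3) :
    ∃ (n : ℕ) (p : Fin n → ℝ) (ρA ρB : Fin n → Matrix (Fin 2) (Fin 2) ℂ),
      (∀ i, 0 ≤ p i) ∧ (∑ i, p i = 1) ∧
      (∀ i, (ρA i).PosSemidef ∧ (ρA i).trace = 1) ∧
      (∀ i, (ρB i).PosSemidef ∧ (ρB i).trace = 1) ∧
      werner α = ∑ i, ((p i : ℝ) : ℂ) • (ρA i ⊗ₖ ρB i) := by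
  have hsep : IsSeparableState (werner α) := by
    rw [werner_eq_convexComb]
    exact isSeparableState_werner_third.convexComb isSeparableState_werner_zero
      (by linarith) (by linarith)
  exact hsep
end
end
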